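/- arXiv:2206.09338 — 7 statements merged into one kernel-verified Lean document; each statement's English description precedes it below -/
import Mathlib

section
/- Let ε > 0, let I ⊂ ℝ be an open interval, E : I → ℂ^{n×n} a differentiable path of matrices, λ : I → ℂ a differentiable function, and x, y : I → ℂⁿ with ‖x(t)‖ = ‖y(t)‖ = 1 and x(t)* y(t) real and positive for all t ∈ I, such that λ'(t) = ε (x(t)* E'(t) y(t)) / (x(t)* y(t)). Let f : ℂ → ℝ be differentiable in the real sense, and let p : I → ℂ be such that for every t ∈ I the Fréchet derivative of f at λ(t) is given by h ↦ Re(conj(p(t)) · h) for h ∈ ℂ. Set κ(t) = 1/(x(t)* y(t)) > 0 and G(t) = p(t) · x(t) y(t)* ∈ ℂ^{n×n} (a rank-one matrix). Then t ↦ f(λ(t)) is differentiable and (d/dt) f(λ(t)) = ε κ(t) · Re⟨G(t), E'(t)⟩. -/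
open Matrix

/-- Frobenius inner product `⟨X,Y⟩ = tr(X*Y) = Σᵢⱼ conj(Xᵢⱼ) Yᵢⱼ` on complex matrices. -/
noncomputable def frobInner {n : ℕ} (X Y : Matrix (Fin n) (Fin n) ℂ) : ℂ :=
  ∑ i, ∑ j, (starRingEnd ℂ) (X i j) * Y i j

/-!
By the chain rule, `(d/dt) f(λ(t)) = Re(conj p · λ'(t)) = ε Re(conj p · x* E' y) / (x* y)`,
the division being by the real number `x* y`. The identity
`⟨p · x y*, A⟩ = conj p · x* A y` turns the numerator into the Frobenius pairing.
-/

section FrobInner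

variable {n : ℕ}

theorem frobInner_smul_left (c : ℂ) (X Y : Matrix (Fin n) (Fin n) ℂ) :
    frobInner (c • X) Y = starRingEnd ℂ c * frobInner X Y := by
  simp only [frobInner, Matrix.smul_apply, smul_eq_mul, map_mul, Finset.mul_sum, mul_assoc]

theorem frobInner_vecMulVec_star_left (u v : Fin n → ℂ) (A : Matrix (Fin n) (Fin n) ℂ) :
    frobInner (vecMulVec u (star v)) A = star u ⬝ᵥ A *ᵥ v := by
  simp only [frobInner, vecMulVec_apply, Pi.star_apply, Complex.star_def, map_mul,
    Complex.conj_conj, dotProduct, mulVec, Finset.mul_sum]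
  exact Finset.sum_congr rfl fun i _ => Finset.sum_congr rfl fun j _ => by ring

end FrobInner

theorem HasDerivAt.comp_of_fderiv_eq_re_conj_mul {f : ℂ → ℝ} {g : ℝ → ℂ} {g' p : ℂ} {t : ℝ}
    (hg : HasDerivAt g g' t) (hf : DifferentiableAt ℝ f (g t))
    (hp : ∀ h, fderiv ℝ f (g t) h = (starRingEnd ℂ p * h).re) :
    HasDerivAt (fun s => f (g s)) (starRingEnd ℂ p * g').re t := by
  have := hf.hasFDerivAt.comp_hasDerivAt t hg
  rwa [hp] at this

theorem free_gradient_derivative_general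
    {n : ℕ} (ε a b : ℝ)
    (E' : ℝ → Matrix (Fin n) (Fin n) ℂ)
    (lam : ℝ → ℂ) (x y : ℝ → Fin n → ℂ) (f : ℂ → ℝ) (p : ℝ → ℂ)
    (hxyreal : ∀ t ∈ Set.Ioo a b, (star (x t) ⬝ᵥ y t).im = 0)
    (hlam : ∀ t ∈ Set.Ioo a b,
      HasDerivAt lam ((ε : ℂ) * (star (x t) ⬝ᵥ (E' t).mulVec (y t)) / (star (x t) ⬝ᵥ y t)) t)
    (hf : ∀ t ∈ Set.Ioo a b, DifferentiableAt ℝ f (lam t))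
    (hp : ∀ t ∈ Set.Ioo a b, ∀ h : ℂ, fderiv ℝ f (lam t) h = ((starRingEnd ℂ) (p t) * h).re)
    (t : ℝ) (ht : t ∈ Set.Ioo a b) :
    HasDerivAt (fun s => f (lam s))
      (ε * ((star (x t) ⬝ᵥ y t).re)⁻¹ *
        (frobInner (p t • vecMulVec (x t) (star (y t))) (E' t)).re) t := by
  obtain ⟨r, hr⟩ : ∃ r : ℝ, (r : ℂ) = star (x t) ⬝ᵥ y t :=
    ⟨_, Complex.ext rfl (hxyreal t ht).symm⟩
  refine ((hlam t ht).comp_of_fderiv_eq_re_conj_mul (hf t ht) (hp t ht)).congr_deriv ?_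
  rw [frobInner_smul_left, frobInner_vecMulVec_star_left, ← hr, Complex.ofReal_re, mul_div_assoc',
    mul_left_comm, Complex.div_ofReal_re, Complex.re_ofReal_mul]
  ring

/-- Free gradient of the functional `F_ε(E(t)) = f(λ(t))`:
`(d/dt) f(λ(t)) = ε κ(t) Re⟨G(t), E'(t)⟩` where `κ(t) = 1/(x(t)* y(t)) > 0` and
`G(t) = p(t) x(t) y(t)*` is the rank-one (rescaled) gradient. -/
theorem free_gradient_derivative
    {n : ℕ} (ε a b : ℝ) (hε : 0 < ε)
    (E E' : ℝ → Matrix (Fin n) (Fin n) ℂ)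
    (lam : ℝ → ℂ) (x y : ℝ → Fin n → ℂ) (f : ℂ → ℝ) (p : ℝ → ℂ)
    (hE : ∀ t ∈ Set.Ioo a b, ∀ i j, HasDerivAt (fun s => E s i j) (E' t i j) t)
    (hxnorm : ∀ t ∈ Set.Ioo a b, star (x t) ⬝ᵥ x t = 1)
    (hynorm : ∀ t ∈ Set.Ioo a b, star (y t) ⬝ᵥ y t = 1)
    (hxyreal : ∀ t ∈ Set.Ioo a b, (star (x t) ⬝ᵥ y t).im = 0)
    (hxypos : ∀ t ∈ Set.Ioo a b, 0 < (star (x t) ⬝ᵥ y t).re)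
    (hlam : ∀ t ∈ Set.Ioo a b,
      HasDerivAt lam ((ε : ℂ) * (star (x t) ⬝ᵥ (E' t).mulVec (y t)) / (star (x t) ⬝ᵥ y t)) t)
    (hf : ∀ t ∈ Set.Ioo a b, DifferentiableAt ℝ f (lam t))
    (hp : ∀ t ∈ Set.Ioo a b, ∀ h : ℂ, fderiv ℝ f (lam t) h = ((starRingEnd ℂ) (p t) * h).re)
    (t : ℝ) (ht : t ∈ Set.Ioo a b) :
    HasDerivAt (fun s => f (lam s))
      (ε * ((star (x t) ⬝ᵥ y t).re)⁻¹ *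
        (frobInner (p t • vecMulVec (x t) (star (y t))) (E' t)).re) t :=
  free_gradient_derivative_general ε a b E' lam x y f p hxyreal hlam hf hp t ht
end

section
/- Let S be a real-linear subspace of ℂ^{n×n} with orthogonal projection Π^S, let E ∈ S with ‖E‖_F = 1, let G ∈ ℂ^{n×n} and set G^S = Π^S G. Assume W := −G^S + Re⟨G^S, E⟩ · E ≠ 0 (equivalently, G^S is not a real scalar multiple of E), and set μ = ‖W‖_F and Z⋆ = W / μ. Then: (i) Z⋆ ∈ S, Re⟨E, Z⋆⟩ = 0 and ‖Z⋆‖_F = 1; (ii) for every Z ∈ S with Re⟨E, Z⟩ = 0 and ‖Z‖_F = 1 one has Re⟨G, Z⋆⟩ ≤ Re⟨G, Z⟩; (iii) equality in (ii) holds only if Z = Z⋆. -/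
/-!
The real part of the Frobenius inner product is the Euclidean inner product of the matrix entries,
so everything happens in a real inner product space. For admissible `Z` (in `S`, orthogonal to `E`)
the projection property and `Re⟨E, Z⟩ = 0` give `Re⟨G, Z⟩ = Re⟨G^S, Z⟩ = -Re⟨W, Z⟩`, and `W` is
itself admissible. Minimizing `-Re⟨W, Z⟩` over unit vectors is Cauchy–Schwarz, whose equality case
forces `Z = W / ‖W‖`.
-/

open Matrix

/-- Frobenius norm. -/
noncomputable def frobNorm {n : ℕ} (X : Matrix (Fin n) (Fin n) ℂ) : ℝ :=
  Real.sqrt (frobInner X X).re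

open RealInnerProductSpace

section InnerProductSpace

variable {V : Type*} [NormedAddCommGroup V] [InnerProductSpace ℝ V]

theorem inner_neg_add_inner_smul_self_eq_zero {e : V} (he : ‖e‖ = 1) (q : V) :
    ⟪e, -q + ⟪q, e⟫ • e⟫ = 0 := by
  rw [inner_add_right, inner_neg_right, inner_smul_right, real_inner_self_eq_norm_sq, he,
    real_inner_comm]
  ring

theorem inner_eq_neg_inner_neg_add_inner_smul {e g q z : V} (hqz : ⟪q, z⟫ = ⟪g, z⟫)
    (hez : ⟪e, z⟫ = 0) : ⟪g, z⟫ = -⟪-q + ⟪q, e⟫ • e, z⟫ := by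
  rw [inner_add_left, inner_neg_left, real_inner_smul_left, hez, hqz]
  ring

theorem real_inner_inv_norm_smul_self (w : V) : ⟪w, ‖w‖⁻¹ • w⟫ = ‖w‖ := by
  rw [real_inner_smul_right, real_inner_self_eq_norm_sq]
  rcases eq_or_ne ‖w‖ 0 with h | h
  · simp [h]
  · field_simp

theorem eq_inv_norm_smul_of_real_inner_eq_norm {w z : V} (hw : w ≠ 0) (hz : ‖z‖ = 1)
    (h : ⟪w, z⟫ = ‖w‖) : z = ‖w‖⁻¹ • w := by
  have hwz : ⟪w, z⟫ = ‖w‖ * ‖z‖ := by rw [h, hz, mul_one]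
  rw [inner_eq_norm_mul_iff_real, hz, one_smul] at hwz
  rw [eq_inv_smul_iff₀ (norm_ne_zero_iff.2 hw)]
  exact hwz.symm

end InnerProductSpace

noncomputable def frobVec {n : ℕ} :
    Matrix (Fin n) (Fin n) ℂ ≃ₗ[ℝ] EuclideanSpace ℂ (Fin n × Fin n) :=
  (LinearEquiv.curry ℝ ℂ (Fin n) (Fin n)).symm.trans (WithLp.linearEquiv 2 ℝ _).symm

theorem re_frobInner_eq_inner {n : ℕ} (X Y : Matrix (Fin n) (Fin n) ℂ) :
    (frobInner X Y).re = ⟪frobVec X, frobVec Y⟫ := by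
  simp only [frobInner, PiLp.inner_apply, Complex.inner, Fintype.sum_prod_type, Complex.re_sum,
    mul_comm]
  rfl

theorem frobNorm_eq_norm {n : ℕ} (X : Matrix (Fin n) (Fin n) ℂ) : frobNorm X = ‖frobVec X‖ := by
  rw [frobNorm, re_frobInner_eq_inner, norm_eq_sqrt_real_inner]

/-- Direction of steepest admissible descent: with `W = -G^S + Re⟨G^S,E⟩E ≠ 0`, `μ = ‖W‖_F`
and `Z⋆ = W/μ`, the matrix `Z⋆` lies in `S`, is orthogonal to `E`, has unit norm, minimizes
`Re⟨G, Z⟩` among all such `Z`, and is the unique minimizer. -/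
theorem steepest_admissible_descent
    {n : ℕ} (S : Submodule ℝ (Matrix (Fin n) (Fin n) ℂ))
    (P : Matrix (Fin n) (Fin n) ℂ → Matrix (Fin n) (Fin n) ℂ)
    (hPmem : ∀ Z, P Z ∈ S)
    (hPproj : ∀ Z, ∀ W ∈ S, (frobInner (P Z) W).re = (frobInner Z W).re)
    (E : Matrix (Fin n) (Fin n) ℂ) (hE : E ∈ S) (hEnorm : frobNorm E = 1)
    (G W : Matrix (Fin n) (Fin n) ℂ)
    (hW : W = -(P G) + (frobInner (P G) E).re • E)
    (hWne : W ≠ 0)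
    (μ : ℝ) (hμ : μ = frobNorm W)
    (Zstar : Matrix (Fin n) (Fin n) ℂ) (hZstar : Zstar = μ⁻¹ • W) :
    (Zstar ∈ S ∧ (frobInner E Zstar).re = 0 ∧ frobNorm Zstar = 1) ∧
    (∀ Z ∈ S, (frobInner E Z).re = 0 → frobNorm Z = 1 →
      (frobInner G Zstar).re ≤ (frobInner G Z).re) ∧
    (∀ Z ∈ S, (frobInner E Z).re = 0 → frobNorm Z = 1 →
      (frobInner G Zstar).re = (frobInner G Z).re → Z = Zstar) := by
  have hWS : W ∈ S := hW ▸ S.add_mem (S.neg_mem (hPmem G)) (S.smul_mem _ hE)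
  have hTW : frobVec W = -frobVec (P G) + ⟪frobVec (P G), frobVec E⟫ • frobVec E := by
    rw [hW, map_add, map_neg, map_smul, re_frobInner_eq_inner]
  have hTW0 : frobVec W ≠ 0 := frobVec.map_ne_zero_iff.2 hWne
  have hTZstar : frobVec Zstar = ‖frobVec W‖⁻¹ • frobVec W := by
    rw [hZstar, hμ, map_smul, frobNorm_eq_norm]
  have hobjective : ∀ Z ∈ S, (frobInner E Z).re = 0 →
      (frobInner G Z).re = -⟪frobVec W, frobVec Z⟫ := fun Z hZ hEZ => by
    rw [re_frobInner_eq_inner] at hEZ ⊢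
    rw [hTW]
    refine inner_eq_neg_inner_neg_add_inner_smul ?_ hEZ
    rw [← re_frobInner_eq_inner, ← re_frobInner_eq_inner, hPproj G Z hZ]
  have hZstarS : Zstar ∈ S := hZstar ▸ S.smul_mem _ hWS
  have hEZstar : (frobInner E Zstar).re = 0 := by
    rw [re_frobInner_eq_inner, hTZstar, real_inner_smul_right, hTW,
      inner_neg_add_inner_smul_self_eq_zero (by rw [← frobNorm_eq_norm, hEnorm]), mul_zero]
  have hGZstar : (frobInner G Zstar).re = -‖frobVec W‖ := by
    rw [hobjective Zstar hZstarS hEZstar, hTZstar, real_inner_inv_norm_smul_self]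
  refine ⟨⟨hZstarS, hEZstar, by rw [frobNorm_eq_norm, hTZstar]; exact norm_smul_inv_norm hTW0⟩,
    fun Z hZ hEZ hZ1 => ?_, fun Z hZ hEZ hZ1 heq => ?_⟩
  · rw [frobNorm_eq_norm] at hZ1
    rw [hGZstar, hobjective Z hZ hEZ, neg_le_neg_iff]
    simpa [hZ1] using real_inner_le_norm (frobVec W) (frobVec Z)
  · rw [frobNorm_eq_norm] at hZ1
    rw [hGZstar, hobjective Z hZ hEZ, neg_inj] at heq
    exact frobVec.injective (hTZstar ▸ eq_inv_norm_smul_of_real_inner_eq_norm hTW0 hZ1 heq.symm)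
end

section
/- Let S be a real-linear subspace of ℂ^{n×n} with orthogonal projection Π^S. Let I ⊂ ℝ be an interval, Y : I → ℂ^{n×n} differentiable, and set E(t) = Π^S(Y(t)). Suppose at a point t₀ ∈ I one has ‖E(t₀)‖_F = 1 and Y'(t₀) = −K + Re⟨K, E(t₀)⟩ · Y(t₀) for some matrix K ∈ ℂ^{n×n}. Then Re⟨E(t₀), E'(t₀)⟩ = 0, i.e. the derivative of t ↦ ‖E(t)‖_F² vanishes at t₀. -/
/-!
Along the flow, `d/dt ‖E‖² = 2 Re⟨E, Π^S Y'⟩`. Because `E ∈ S`, the projection can be moved off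
`Y'`: `Re⟨E, Π^S Y'⟩ = Re⟨Y', E⟩ = -c + c Re⟨Y, E⟩` with `c = Re⟨K, E⟩`, and again
`Re⟨Y, E⟩ = Re⟨Π^S Y, E⟩ = ‖E‖² = 1`, so the two terms cancel.
-/

open Matrix

section EntrywiseDeriv

-- Matrices carry no global norm; the entrywise sup norm only serves to push derivatives through `P`.
attribute [local instance] Matrix.normedAddCommGroup Matrix.normedSpace

variable {m n m' n' F F' : Type*} [Fintype m] [Fintype n] [Fintype m'] [Fintype n']
  [NormedAddCommGroup F] [NormedSpace ℝ F] [NormedAddCommGroup F'] [NormedSpace ℝ F']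

omit [Fintype m] in
theorem Matrix.hasDerivAt_iff {Y : ℝ → Matrix m n F} {Y' : Matrix m n F} {t : ℝ} :
    HasDerivAt Y Y' t ↔ ∀ i j, HasDerivAt (fun s => Y s i j) (Y' i j) t :=
  hasDerivAt_pi.trans (forall_congr' fun _ => hasDerivAt_pi)

theorem LinearMap.hasDerivAt_entrywise [FiniteDimensional ℝ F]
    (P : Matrix m n F →ₗ[ℝ] Matrix m' n' F') {Y : ℝ → Matrix m n F} {Y' : Matrix m n F} {t : ℝ}
    (hY : ∀ i j, HasDerivAt (fun s => Y s i j) (Y' i j) t) :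
    ∀ i j, HasDerivAt (fun s => P (Y s) i j) (P Y' i j) t :=
  Matrix.hasDerivAt_iff.mp <|
    P.toContinuousLinearMap.hasFDerivAt.comp_hasDerivAt t (Matrix.hasDerivAt_iff.mpr hY)

end EntrywiseDeriv

section FrobeniusInner

variable {n : ℕ}

lemma frobInner_re_comm (X Y : Matrix (Fin n) (Fin n) ℂ) :
    (frobInner X Y).re = (frobInner Y X).re := by
  simp only [frobInner, Complex.re_sum, Complex.mul_re, Complex.conj_re, Complex.conj_im]
  congr! 2 with i _ j _
  ring

lemma frobInner_self_re_nonneg (X : Matrix (Fin n) (Fin n) ℂ) :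
    0 ≤ (frobInner X X).re := by
  simp only [frobInner, Complex.re_sum, Complex.mul_re, Complex.conj_re, Complex.conj_im]
  refine Finset.sum_nonneg fun i _ => Finset.sum_nonneg fun j _ => ?_
  nlinarith [sq_nonneg (X i j).re, sq_nonneg (X i j).im]

lemma frobNorm_sq (X : Matrix (Fin n) (Fin n) ℂ) : frobNorm X ^ 2 = (frobInner X X).re :=
  Real.sq_sqrt (frobInner_self_re_nonneg X)

lemma frobInner_add_left (X Y Z : Matrix (Fin n) (Fin n) ℂ) :
    frobInner (X + Y) Z = frobInner X Z + frobInner Y Z := by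
  simp [frobInner, add_mul, Finset.sum_add_distrib]

lemma frobInner_neg_left (X Z : Matrix (Fin n) (Fin n) ℂ) :
    frobInner (-X) Z = -frobInner X Z := by
  simp [frobInner]

lemma frobInner_real_smul_left (r : ℝ) (X Z : Matrix (Fin n) (Fin n) ℂ) :
    frobInner (r • X) Z = r * frobInner X Z := by
  simp [frobInner, Complex.real_smul, mul_assoc, Finset.mul_sum]

theorem hasDerivAt_frobInner {X Y : ℝ → Matrix (Fin n) (Fin n) ℂ} {X' Y' : Matrix (Fin n) (Fin n) ℂ}
    {t : ℝ} (hX : ∀ i j, HasDerivAt (fun s => X s i j) (X' i j) t)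
    (hY : ∀ i j, HasDerivAt (fun s => Y s i j) (Y' i j) t) :
    HasDerivAt (fun s => frobInner (X s) (Y s)) (frobInner X' (Y t) + frobInner (X t) Y') t := by
  refine (HasDerivAt.fun_sum fun i _ => HasDerivAt.fun_sum fun j _ =>
    (hX i j).star.fun_mul (hY i j)).congr_deriv ?_
  simp only [frobInner, ← Finset.sum_add_distrib]
  rfl

theorem hasDerivAt_frobNorm_sq {X : ℝ → Matrix (Fin n) (Fin n) ℂ} {X' : Matrix (Fin n) (Fin n) ℂ}
    {t : ℝ} (hX : ∀ i j, HasDerivAt (fun s => X s i j) (X' i j) t) :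
    HasDerivAt (fun s => frobNorm (X s) ^ 2) (2 * (frobInner (X t) X').re) t := by
  simp only [frobNorm_sq]
  refine (Complex.reCLM.hasFDerivAt.comp_hasDerivAt t (hasDerivAt_frobInner hX hX)).congr_deriv ?_
  rw [Complex.reCLM_apply, Complex.add_re, frobInner_re_comm X' (X t), two_mul]

end FrobeniusInner

/-- The rank-1 projected differential equation `Y' = -K + Re⟨K, E⟩Y` (with `E = Π^S Y`)
preserves the unit Frobenius norm of `E = Π^S Y`: at a point `t₀` where `‖E(t₀)‖_F = 1`,
`Re⟨E(t₀), E'(t₀)⟩ = 0`, i.e. the derivative of `t ↦ ‖E(t)‖_F²` vanishes. -/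
theorem projected_flow_norm_conservation
    {n : ℕ} (S : Submodule ℝ (Matrix (Fin n) (Fin n) ℂ))
    (P : Matrix (Fin n) (Fin n) ℂ →ₗ[ℝ] Matrix (Fin n) (Fin n) ℂ)
    (hPmem : ∀ Z, P Z ∈ S)
    (hPproj : ∀ Z, ∀ W ∈ S, (frobInner (P Z) W).re = (frobInner Z W).re)
    (t₀ : ℝ) (Y : ℝ → Matrix (Fin n) (Fin n) ℂ) (Y' K : Matrix (Fin n) (Fin n) ℂ)
    (hY : ∀ i j, HasDerivAt (fun s => Y s i j) (Y' i j) t₀)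
    (hEnorm : frobNorm (P (Y t₀)) = 1)
    (hode : Y' = -K + (frobInner K (P (Y t₀))).re • Y t₀) :
    (frobInner (P (Y t₀)) (P Y')).re = 0 ∧
    HasDerivAt (fun t => (frobNorm (P (Y t))) ^ 2) 0 t₀ := by
  set E := P (Y t₀)
  set c := (frobInner K E).re
  have hE : (frobInner E E).re = 1 := by rw [← frobNorm_sq, hEnorm, one_pow]
  have hortho : (frobInner E (P Y')).re = 0 :=
    calc (frobInner E (P Y')).re
        = (frobInner Y' E).re := by rw [frobInner_re_comm, hPproj _ _ (hPmem _)]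
      _ = -c + c * (frobInner (Y t₀) E).re := by
        rw [hode, frobInner_add_left, frobInner_neg_left, frobInner_real_smul_left]
        simp [c]
      _ = -c + c * (frobInner E E).re := by rw [hPproj _ _ (hPmem _)]
      _ = 0 := by rw [hE]; ring
  refine ⟨hortho, ?_⟩
  convert hasDerivAt_frobNorm_sq (P.hasDerivAt_entrywise hY)
  rw [hortho, mul_zero]
end

section
/- Let u, v, x, y ∈ ℂⁿ be unit vectors, c ∈ ℂ, μ ∈ ℝ with μ ≠ 0, and let W ∈ ℂ^{n×n} satisfy (I − u u*) W (I − v v*) = W. If c · x y* = μ · u v* + W, then W = 0 and c · x y* = μ · u v*; in particular x is a complex scalar multiple of u and y is a complex scalar multiple of v (whenever c ≠ 0). -/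
open Matrix

/-!
Since `(I - u u*) W (I - v v*) = W`, we have `u* W = 0` and `W v = 0`, so `M := c x y*` satisfies
`M v = μ u` and `u* M = μ v*`. For a rank-one matrix `M` one has `(M v)(u* M) = (u* M v) M`;
here this reads `μ² u v* = μ M`, and `μ ≠ 0` gives `M = μ u v*`, i.e. `W = 0`. Applying
`c x y* = μ u v*` to `y`, resp. multiplying it by `x*` on the left, exhibits `x ∈ ℂ u`, `y ∈ ℂ v`.
-/

namespace Matrix

variable {n : Type*} [Fintype n]

section CommRing

variable {R : Type*} [CommRing R]

theorem vecMulVec_mulVec_of_comm (a b w : n → R) : vecMulVec a b *ᵥ w = (b ⬝ᵥ w) • a := by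
  rw [vecMulVec_mulVec, op_smul_eq_smul]

theorem vecMulVec_mulVec_vecMul_vecMulVec (a b v w : n → R) :
    vecMulVec (vecMulVec a b *ᵥ v) (w ᵥ* vecMulVec a b) =
      (w ⬝ᵥ vecMulVec a b *ᵥ v) • vecMulVec a b := by
  rw [vecMulVec_mulVec_of_comm, vecMul_vecMulVec, smul_vecMulVec, vecMulVec_smul, smul_smul,
    dotProduct_smul, smul_eq_mul, mul_comm]

variable [DecidableEq n]

theorem one_sub_vecMulVec_mulVec_self {a b : n → R} (h : b ⬝ᵥ a = 1) :
    (1 - vecMulVec a b) *ᵥ a = 0 := by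
  rw [sub_mulVec, vecMulVec_mulVec_of_comm, h, one_smul, one_mulVec, sub_self]

theorem vecMul_one_sub_vecMulVec_self {a b : n → R} (h : b ⬝ᵥ a = 1) :
    b ᵥ* (1 - vecMulVec a b) = 0 := by
  rw [vecMul_sub, vecMul_vecMulVec, h, one_smul, vecMul_one, sub_self]

end CommRing

section Field

variable {K : Type*} [Field K] {a b a' b' : n → K}

theorem exists_eq_smul_left_of_vecMulVec_eq (h : vecMulVec a b = vecMulVec a' b') {w : n → K}
    (hw : b ⬝ᵥ w ≠ 0) : ∃ k : K, a = k • a' := by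
  have := congrArg (· *ᵥ w) h
  simp only [vecMulVec_mulVec_of_comm] at this
  exact ⟨(b ⬝ᵥ w)⁻¹ * (b' ⬝ᵥ w), by rw [mul_smul, ← this, inv_smul_smul₀ hw]⟩

theorem exists_eq_smul_right_of_vecMulVec_eq (h : vecMulVec a b = vecMulVec a' b') {w : n → K}
    (hw : w ⬝ᵥ a ≠ 0) : ∃ k : K, b = k • b' := by
  have := congrArg (w ᵥ* ·) h
  simp only [vecMul_vecMulVec] at this
  exact ⟨(w ⬝ᵥ a)⁻¹ * (w ⬝ᵥ a'), by rw [mul_smul, ← this, inv_smul_smul₀ hw]⟩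

end Field

end Matrix

/-- A rank-one matrix that decomposes as a real multiple of `u v*` plus a part `W`
annihilated by the tangent-space projection (i.e. `(I-uu*) W (I-vv*) = W`) must itself be
that multiple of `u v*`; in particular `x` and `y` are then complex multiples of `u` and `v`
whenever `c ≠ 0`. -/
theorem rank_one_decomposition
    {n : ℕ} (u v x y : Fin n → ℂ)
    (hu : star u ⬝ᵥ u = 1) (hv : star v ⬝ᵥ v = 1)
    (hx : star x ⬝ᵥ x = 1) (hy : star y ⬝ᵥ y = 1)
    (c : ℂ) (μ : ℝ) (hμ : μ ≠ 0)
    (W : Matrix (Fin n) (Fin n) ℂ)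
    (hW : (1 - vecMulVec u (star u)) * W * (1 - vecMulVec v (star v)) = W)
    (h : c • vecMulVec x (star y) = (μ : ℂ) • vecMulVec u (star v) + W) :
    W = 0 ∧ c • vecMulVec x (star y) = (μ : ℂ) • vecMulVec u (star v) ∧
      (c ≠ 0 → (∃ a : ℂ, x = a • u) ∧ ∃ b : ℂ, y = b • v) := by
  have hWv : W *ᵥ v = 0 := by
    rw [← hW, ← mulVec_mulVec, one_sub_vecMulVec_mulVec_self hv, mulVec_zero]
  have huW : star u ᵥ* W = 0 := by
    rw [← hW, Matrix.mul_assoc, ← vecMul_vecMul, vecMul_one_sub_vecMulVec_self hu, zero_vecMul]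
  rw [← smul_vecMulVec] at h ⊢
  set M := vecMulVec (c • x) (star y)
  have hMv : M *ᵥ v = (μ : ℂ) • u := by
    rw [h, add_mulVec, hWv, add_zero, smul_mulVec, vecMulVec_mulVec_of_comm, hv, one_smul]
  have huM : star u ᵥ* M = (μ : ℂ) • star v := by
    rw [h, vecMul_add, huW, add_zero, vecMul_smul, vecMul_vecMulVec, hu, one_smul]
  have hM : M = (μ : ℂ) • vecMulVec u (star v) := by
    refine smul_right_injective _ (Complex.ofReal_ne_zero.mpr hμ) ?_
    calc (μ : ℂ) • M = (star u ⬝ᵥ M *ᵥ v) • M := by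
          rw [hMv, dotProduct_smul, hu, smul_eq_mul, mul_one]
      _ = vecMulVec (M *ᵥ v) (star u ᵥ* M) := (vecMulVec_mulVec_vecMul_vecMulVec ..).symm
      _ = (μ : ℂ) • ((μ : ℂ) • vecMulVec u (star v)) := by
        rw [hMv, huM, smul_vecMulVec, vecMulVec_smul]
  refine ⟨by simpa [hM] using h, hM, fun hc => ⟨?_, ?_⟩⟩
  · rw [← vecMulVec_smul] at hM
    obtain ⟨k, hk⟩ := exists_eq_smul_left_of_vecMulVec_eq hM (w := y) (by simp [hy])
    exact ⟨c⁻¹ * k, by rw [mul_smul, ← hk, inv_smul_smul₀ hc]⟩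
  · rw [← smul_vecMulVec] at hM
    obtain ⟨k, hk⟩ := exists_eq_smul_right_of_vecMulVec_eq hM (w := star x) (by simp [hx, hc])
    exact ⟨star k, by rw [← star_star y, hk, star_smul, star_star]⟩
end

section
/- Let S be a real-linear subspace of ℂ^{n×n} with orthogonal projection Π^S. Let u, v, x, y ∈ ℂⁿ be unit vectors, ρ > 0, Y = ρ · u v*, E = Π^S Y with ‖E‖_F = 1, c ∈ ℂ, and G = c · x y*. Define P_Y(Z) = Z − (I − u u*) Z (I − v v*). Assume P_Y(G) ≠ 0 and that Y is a stationary point of the rank-1 projected differential equation, i.e. −P_Y(G) + Re⟨P_Y(G), E⟩ · Y = 0. Then: (i) P_Y(G) = G; (ii) there is a nonzero real number μ such that G = μ · Y; (iii) E is a stationary point of the structure-constrained gradient system, i.e. −Π^S G + Re⟨Π^S G, E⟩ · E = 0. -/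
/-!
Stationarity says `P_Y(G) = α Y` with `α = Re⟨P_Y(G), E⟩ ≠ 0`. The tangent projection `P_Y` does not
change the row `u* Z` or the column `Z v` of a matrix, so `G v = αρ u` and `u* G = αρ v*`. A rank-one
matrix `M` satisfies `(M v)(u* M) = (u* M v) M`, hence `G = αρ u v* = α Y`, which gives (i) and (ii).
Then `Π^S G = α E` by linearity, and `Re⟨α E, E⟩ = α ‖E‖² = α` gives (iii).
-/

open Matrix

namespace Matrix

variable {ι R : Type*} [Fintype ι]

lemma vecMulVec_mulVec_vecMul_eq_smul [CommSemiring R] (a b v w : ι → R) :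
    vecMulVec (vecMulVec a b *ᵥ v) (w ᵥ* vecMulVec a b) =
      (w ⬝ᵥ vecMulVec a b *ᵥ v) • vecMulVec a b := by
  simp only [vecMulVec_mulVec, vecMul_vecMulVec, op_smul_eq_smul, dotProduct_smul,
    smul_vecMulVec, vecMulVec_smul, smul_smul, smul_eq_mul]
  ring_nf

lemma vecMulVec_eq_smul_vecMulVec_of_mulVec_of_vecMul [Field R] {a b v w p q : ι → R} {r : R}
    (hr : r ≠ 0) (hwp : w ⬝ᵥ p = 1) (hv : vecMulVec a b *ᵥ v = r • p)
    (hw : w ᵥ* vecMulVec a b = r • q) :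
    vecMulVec a b = r • vecMulVec p q := by
  have key := vecMulVec_mulVec_vecMul_eq_smul a b v w
  rw [hv, hw, dotProduct_smul, hwp, smul_eq_mul, mul_one, smul_vecMulVec, vecMulVec_smul,
    smul_smul] at key
  exact smul_right_injective _ hr (by simp only [← key, smul_smul])

section Projection

variable [Ring R] [DecidableEq ι]

lemma vecMul_one_sub_vecMulVec {a w : ι → R} (h : w ⬝ᵥ a = 1) :
    w ᵥ* (1 - vecMulVec a w) = 0 := by
  rw [vecMul_sub, vecMul_one, vecMul_vecMulVec, h, one_smul, sub_self]

lemma one_sub_vecMulVec_mulVec {a w : ι → R} (h : w ⬝ᵥ a = 1) :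
    (1 - vecMulVec a w) *ᵥ a = 0 := by
  rw [sub_mulVec, one_mulVec, vecMulVec_mulVec, h, MulOpposite.op_one, one_smul, sub_self]

lemma vecMul_sub_one_sub_vecMulVec_mul {a w : ι → R} (h : w ⬝ᵥ a = 1) (Z N : Matrix ι ι R) :
    w ᵥ* (Z - (1 - vecMulVec a w) * Z * N) = w ᵥ* Z := by
  rw [vecMul_sub, ← vecMul_vecMul, ← vecMul_vecMul, vecMul_one_sub_vecMulVec h, zero_vecMul,
    zero_vecMul, sub_zero]

lemma sub_mul_one_sub_vecMulVec_mulVec {a w : ι → R} (h : w ⬝ᵥ a = 1) (M Z : Matrix ι ι R) :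
    (Z - M * Z * (1 - vecMulVec a w)) *ᵥ a = Z *ᵥ a := by
  rw [sub_mulVec, ← mulVec_mulVec, one_sub_vecMulVec_mulVec h, mulVec_zero, sub_zero]

end Projection

end Matrix

lemma re_frobInner_smul_left {n : ℕ} (r : ℝ) (X Y : Matrix (Fin n) (Fin n) ℂ) :
    (frobInner (r • X) Y).re = r * (frobInner X Y).re := by
  simp only [frobInner, Matrix.smul_apply, Complex.real_smul, map_mul, Complex.conj_ofReal,
    mul_assoc, ← Finset.mul_sum, Complex.re_ofReal_mul]

lemma re_frobInner_self_of_frobNorm_eq_one {n : ℕ} {X : Matrix (Fin n) (Fin n) ℂ}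
    (h : frobNorm X = 1) : (frobInner X X).re = 1 :=
  Real.sqrt_eq_one.mp h

theorem rank_one_stationary_to_gradient_stationary_general
    {n : ℕ}
    (P : Matrix (Fin n) (Fin n) ℂ →ₗ[ℝ] Matrix (Fin n) (Fin n) ℂ)
    (u v x y : Fin n → ℂ)
    (hu : star u ⬝ᵥ u = 1) (hv : star v ⬝ᵥ v = 1)
    (ρ : ℝ) (c : ℂ)
    (Y E G : Matrix (Fin n) (Fin n) ℂ)
    (hY : Y = ρ • vecMulVec u (star v)) (hE : E = P Y) (hEnorm : frobNorm E = 1)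
    (hG : G = c • vecMulVec x (star y))
    (PY : Matrix (Fin n) (Fin n) ℂ → Matrix (Fin n) (Fin n) ℂ)
    (hPY : ∀ Z, PY Z = Z - (1 - vecMulVec u (star u)) * Z * (1 - vecMulVec v (star v)))
    (hPYG : PY G ≠ 0)
    (hstat : -(PY G) + (frobInner (PY G) E).re • Y = 0) :
    PY G = G ∧
    (∃ μ : ℝ, μ ≠ 0 ∧ G = (μ : ℂ) • Y) ∧
    -(P G) + (frobInner (P G) E).re • E = 0 := by
  set α := (frobInner (PY G) E).re
  have hPYG_eq : PY G = α • Y := neg_add_eq_zero.mp hstat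
  have hα : α ≠ 0 := by rintro hα; exact hPYG (by rw [hPYG_eq, hα, zero_smul])
  set r : ℂ := ((α * ρ : ℝ) : ℂ)
  have hPYG_r : PY G = r • vecMulVec u (star v) := by
    rw [hPYG_eq, hY, smul_smul, ← Complex.coe_smul]
  have hr : r ≠ 0 := by rintro hr; exact hPYG (by rw [hPYG_r, hr, zero_smul])
  have hGv : G *ᵥ v = r • u := by
    rw [← sub_mul_one_sub_vecMulVec_mulVec hv, ← hPY, hPYG_r, smul_mulVec, vecMulVec_mulVec, hv,
      MulOpposite.op_one, one_smul]
  have huG : star u ᵥ* G = r • star v := by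
    rw [← vecMul_sub_one_sub_vecMulVec_mul hu, ← hPY, hPYG_r, vecMul_smul, vecMul_vecMulVec, hu,
      one_smul]
  have hGY : G = α • Y := by
    rw [hG, ← vecMulVec_smul] at hGv huG ⊢
    rw [vecMulVec_eq_smul_vecMulVec_of_mulVec_of_vecMul hr hu hGv huG, ← hPYG_r, hPYG_eq]
  have hPG : P G = α • E := by rw [hGY, map_smul, hE]
  have hPG_E : (frobInner (P G) E).re = α := by
    rw [hPG, re_frobInner_smul_left, re_frobInner_self_of_frobNorm_eq_one hEnorm, mul_one]
  exact ⟨hPYG_eq.trans hGY.symm, ⟨α, hα, by rw [hGY, Complex.coe_smul]⟩, by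
    rw [hPG_E, hPG, neg_add_cancel]⟩

/-- If `Y = ρ u v*` is a stationary point of the rank-1 projected differential equation with
`P_Y(G) ≠ 0`, `E = Π^S Y`, `‖E‖_F = 1` and `G = c·x y*`, then `P_Y(G) = G`, `G` is a nonzero
real multiple of `Y`, and `E` is a stationary point of the structure-constrained gradient
system. -/
theorem rank_one_stationary_to_gradient_stationary
    {n : ℕ} (S : Submodule ℝ (Matrix (Fin n) (Fin n) ℂ))
    (P : Matrix (Fin n) (Fin n) ℂ →ₗ[ℝ] Matrix (Fin n) (Fin n) ℂ)
    (hPmem : ∀ Z, P Z ∈ S)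
    (hPproj : ∀ Z, ∀ W ∈ S, (frobInner (P Z) W).re = (frobInner Z W).re)
    (u v x y : Fin n → ℂ)
    (hu : star u ⬝ᵥ u = 1) (hv : star v ⬝ᵥ v = 1)
    (hx : star x ⬝ᵥ x = 1) (hy : star y ⬝ᵥ y = 1)
    (ρ : ℝ) (hρ : 0 < ρ) (c : ℂ)
    (Y E G : Matrix (Fin n) (Fin n) ℂ)
    (hY : Y = ρ • vecMulVec u (star v)) (hE : E = P Y) (hEnorm : frobNorm E = 1)
    (hG : G = c • vecMulVec x (star y))
    (PY : Matrix (Fin n) (Fin n) ℂ → Matrix (Fin n) (Fin n) ℂ)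
    (hPY : ∀ Z, PY Z = Z - (1 - vecMulVec u (star u)) * Z * (1 - vecMulVec v (star v)))
    (hPYG : PY G ≠ 0)
    (hstat : -(PY G) + (frobInner (PY G) E).re • Y = 0) :
    PY G = G ∧
    (∃ μ : ℝ, μ ≠ 0 ∧ G = (μ : ℂ) • Y) ∧
    -(P G) + (frobInner (P G) E).re • E = 0 :=
  rank_one_stationary_to_gradient_stationary_general P u v x y hu hv ρ c Y E G hY hE hEnorm hG PY
    hPY hPYG hstat
end

section
/- Let u, v ∈ ℂⁿ be unit vectors, ρ > 0, Y = ρ · u v*, and let E, G ∈ ℂ^{n×n}. Define P_Y(Z) = Z − (I − u u*) Z (I − v v*) and set r = Re⟨P_Y(G), E⟩. Define a = −(I − u u*) G v − (i/2) Im(u* G v) · u, b = −(I − v v*) G* u + (i/2) Im(u* G v) · v, and c = −Re(u* G v) + r ρ. Then: (i) −P_Y(G) + r · Y = a v* + u b* + c · u v*; (ii) Re(u* a) = 0 and Re(v* b) = 0 (so the factor differential equations ρ u̇ = a, ρ v̇ = b preserve the unit norms of u and v). -/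
/-! With `P = 1 - u u*` and `Q = 1 - v v*`, splitting `G = (P + u u*) G (Q + v v*)` shows that
`G - P G Q` is the sum of the three rank-one pieces `(P G v) v*`, `u (Q G* u)*` and
`(u* G v) u v*`. The terms `∓ (i/2) Im(u* G v)` added to the factors are purely imaginary
multiples of `u` and `v`, so together they contribute `-i Im(u* G v) · u v*`, which turns the
coefficient `-(u* G v)` into the real number `-Re(u* G v)`. Since `u* P = 0` and `v* Q = 0`,
`u* a` and `v* b` reduce to `∓ (i/2) Im(u* G v)`, which are purely imaginary. -/

open Matrix

section

variable {m R : Type*} [Fintype m] [CommRing R] [StarRing R]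

lemma vecMulVec_star_mul_mul_vecMulVec_star (u v : m → R) (G : Matrix m m R) :
    vecMulVec u (star u) * G * vecMulVec v (star v) =
      (star u ⬝ᵥ G *ᵥ v) • vecMulVec u (star v) := by
  rw [vecMulVec_mul, vecMulVec_mul_vecMulVec, vecMulVec_smul, dotProduct_mulVec]

variable [DecidableEq m]

lemma sub_one_sub_vecMulVec_mul_mul (u v : m → R) (G : Matrix m m R) :
    G - (1 - vecMulVec u (star u)) * G * (1 - vecMulVec v (star v)) =
      vecMulVec ((1 - vecMulVec u (star u)) *ᵥ G *ᵥ v) (star v) +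
      vecMulVec u (star ((1 - vecMulVec v (star v)) *ᵥ Gᴴ *ᵥ u)) +
      (star u ⬝ᵥ G *ᵥ v) • vecMulVec u (star v) := by
  rw [mulVec_mulVec, ← mul_vecMulVec, mulVec_mulVec, star_mulVec, ← vecMulVec_mul,
    conjTranspose_mul, conjTranspose_conjTranspose, ← vecMulVec_star_mul_mul_vecMulVec_star]
  simp only [conjTranspose_sub, conjTranspose_one, conjTranspose_vecMulVec, star_star]
  noncomm_ring

lemma star_dotProduct_one_sub_vecMulVec_mulVec {u : m → R} (hu : star u ⬝ᵥ u = 1)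
    (w : m → R) : star u ⬝ᵥ (1 - vecMulVec u (star u)) *ᵥ w = 0 := by
  simp [sub_mulVec, vecMulVec_mulVec, hu]

end

theorem rank_one_factor_decomposition_general
    {n : ℕ} (u v : Fin n → ℂ)
    (hu : star u ⬝ᵥ u = 1) (hv : star v ⬝ᵥ v = 1)
    (ρ : ℝ)
    (G Y : Matrix (Fin n) (Fin n) ℂ)
    (hY : Y = ρ • vecMulVec u (star v))
    (PY : Matrix (Fin n) (Fin n) ℂ → Matrix (Fin n) (Fin n) ℂ)
    (hPY : ∀ Z, PY Z = Z - (1 - vecMulVec u (star u)) * Z * (1 - vecMulVec v (star v)))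
    (r : ℝ)
    (a b : Fin n → ℂ) (c : ℝ)
    (ha : a = -((1 - vecMulVec u (star u)).mulVec (G.mulVec v)) -
      ((Complex.I / 2) * (((star u ⬝ᵥ G.mulVec v).im : ℝ) : ℂ)) • u)
    (hb : b = -((1 - vecMulVec v (star v)).mulVec (Gᴴ.mulVec u)) +
      ((Complex.I / 2) * (((star u ⬝ᵥ G.mulVec v).im : ℝ) : ℂ)) • v)
    (hc : c = -(star u ⬝ᵥ G.mulVec v).re + r * ρ) :
    (-(PY G) + r • Y =
      vecMulVec a (star v) + vecMulVec u (star b) + c • vecMulVec u (star v)) ∧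
    (star u ⬝ᵥ a).re = 0 ∧ (star v ⬝ᵥ b).re = 0 := by
  subst hY ha hb hc
  refine ⟨?_, ?_, ?_⟩
  · rw [hPY, sub_one_sub_vecMulVec_mul_mul]
    simp only [star_add, star_neg, star_smul, sub_vecMulVec, neg_vecMulVec, vecMulVec_add,
      vecMulVec_neg, smul_vecMulVec, vecMulVec_smul]
    match_scalars <;> apply Complex.ext <;> simp
    ring
  · rw [dotProduct_sub, dotProduct_neg, star_dotProduct_one_sub_vecMulVec_mulVec hu,
      dotProduct_smul, hu]
    simp
  · rw [dotProduct_add, dotProduct_neg, star_dotProduct_one_sub_vecMulVec_mulVec hv,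
      dotProduct_smul, hv]
    simp

/-- Decomposition of the rank-1 projected vector field into the factor differential
equations: with `Y = ρ u v*`, `r = Re⟨P_Y(G), E⟩`,
`a = -(I-uu*)Gv - (i/2)Im(u*Gv)u`, `b = -(I-vv*)G*u + (i/2)Im(u*Gv)v` and
`c = -Re(u*Gv) + rρ`, one has `-P_Y(G) + r·Y = a v* + u b* + c·u v*`, and
`Re(u*a) = 0`, `Re(v*b) = 0`, so the factor ODEs `ρu̇ = a`, `ρv̇ = b` preserve unit norms. -/
theorem rank_one_factor_decomposition
    {n : ℕ} (u v : Fin n → ℂ)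
    (hu : star u ⬝ᵥ u = 1) (hv : star v ⬝ᵥ v = 1)
    (ρ : ℝ) (hρ : 0 < ρ)
    (E G Y : Matrix (Fin n) (Fin n) ℂ)
    (hY : Y = ρ • vecMulVec u (star v))
    (PY : Matrix (Fin n) (Fin n) ℂ → Matrix (Fin n) (Fin n) ℂ)
    (hPY : ∀ Z, PY Z = Z - (1 - vecMulVec u (star u)) * Z * (1 - vecMulVec v (star v)))
    (r : ℝ) (hr : r = (frobInner (PY G) E).re)
    (a b : Fin n → ℂ) (c : ℝ)
    (ha : a = -((1 - vecMulVec u (star u)).mulVec (G.mulVec v)) -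
      ((Complex.I / 2) * (((star u ⬝ᵥ G.mulVec v).im : ℝ) : ℂ)) • u)
    (hb : b = -((1 - vecMulVec v (star v)).mulVec (Gᴴ.mulVec u)) +
      ((Complex.I / 2) * (((star u ⬝ᵥ G.mulVec v).im : ℝ) : ℂ)) • v)
    (hc : c = -(star u ⬝ᵥ G.mulVec v).re + r * ρ) :
    (-(PY G) + r • Y =
      vecMulVec a (star v) + vecMulVec u (star b) + c • vecMulVec u (star v)) ∧
    (star u ⬝ᵥ a).re = 0 ∧ (star v ⬝ᵥ b).re = 0 :=
  rank_one_factor_decomposition_general u v hu hv ρ G Y hY PY hPY r a b c ha hb hc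
end

section
/- Let u, v, x, y ∈ ℂⁿ be unit vectors and γ ∈ ℂ; set α = u* x and β = v* y, and assume α ≠ 0, β ≠ 0 and γ ≠ 0. Suppose (u, v) is a stationary point of the combined system, i.e. α conj(β) γ · u − conj(β) γ · x − (i/2) Im(α conj(β) γ) · u = 0 and conj(α) β conj(γ) · v − conj(α) conj(γ) · y − (i/2) Im(conj(α) β conj(γ)) · v = 0. Then Im(α conj(β) γ) = 0, x = α u and y = β v; consequently (u, v) is a stationary point of each of the two split systems separately: α conj(β) γ · u − conj(β) γ · x = 0, conj(α) β conj(γ) · v − conj(α) conj(γ) · y = 0, and the rotational terms (i/2) Im(α conj(β) γ) · u and (i/2) Im(conj(α) β conj(γ)) · v vanish. -/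
open Matrix ComplexConjugate

/-!
After reassociating, each of the two stationarity equations has the shape
`(α c) • u - c • x - ((i/2) Im(α c)) • u = 0` with `c ≠ 0` and `α = u* x`.
Solving for `x` gives `x = k • u` for a scalar `k`; pairing with the unit vector `u` gives
`k = α`, so the equation collapses to `(i/2) Im(α c) • u = 0`, i.e. `Im(α c) = 0`.
Everything else is then algebra.
-/

theorem star_dotProduct_smul_of_unit {ι : Type*} [Fintype ι] {u : ι → ℂ}
    (hu : star u ⬝ᵥ u = 1) (k : ℂ) : star u ⬝ᵥ (k • u) = k := by
  rw [dotProduct_smul, hu, smul_eq_mul, mul_one]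

theorem im_eq_zero_and_eq_smul_of_stationary {ι : Type*} [Fintype ι] {u x : ι → ℂ}
    (hu : star u ⬝ᵥ u = 1) {α c : ℂ} (hα : α = star u ⬝ᵥ x) (hc : c ≠ 0)
    (h : (α * c) • u - c • x - ((Complex.I / 2) * (((α * c).im : ℝ) : ℂ)) • u = 0) :
    (α * c).im = 0 ∧ x = α • u := by
  set r : ℂ := ((α * c).im : ℂ)
  have hx : x = (c⁻¹ * (α * c - Complex.I / 2 * r)) • u := by
    rw [mul_smul, eq_inv_smul_iff₀ hc]
    linear_combination (norm := module) -h
  have hαk : α = c⁻¹ * (α * c - Complex.I / 2 * r) :=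
    hα.trans (by rw [hx, star_dotProduct_smul_of_unit hu])
  have hr0 : r = 0 := by
    field_simp at hαk
    linear_combination (-Complex.I) * hαk + r * Complex.I_sq
  refine ⟨Complex.ofReal_eq_zero.1 hr0, ?_⟩
  rw [hx, hr0, mul_zero, sub_zero, mul_comm α c, inv_mul_cancel_left₀ hc]

theorem splitting_preserves_stationary_points_general
    {n : ℕ} (u v x y : Fin n → ℂ)
    (hu : star u ⬝ᵥ u = 1) (hv : star v ⬝ᵥ v = 1)
    (γ α β : ℂ)
    (hα : α = star u ⬝ᵥ x) (hβ : β = star v ⬝ᵥ y)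
    (hα0 : α ≠ 0) (hβ0 : β ≠ 0) (hγ0 : γ ≠ 0)
    (h1 : (α * (starRingEnd ℂ) β * γ) • u - ((starRingEnd ℂ) β * γ) • x -
      ((Complex.I / 2) * (((α * (starRingEnd ℂ) β * γ).im : ℝ) : ℂ)) • u = 0)
    (h2 : ((starRingEnd ℂ) α * β * (starRingEnd ℂ) γ) • v -
      ((starRingEnd ℂ) α * (starRingEnd ℂ) γ) • y -
      ((Complex.I / 2) * ((((starRingEnd ℂ) α * β * (starRingEnd ℂ) γ).im : ℝ) : ℂ)) • v = 0) :
    (α * (starRingEnd ℂ) β * γ).im = 0 ∧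
    x = α • u ∧ y = β • v ∧
    (α * (starRingEnd ℂ) β * γ) • u - ((starRingEnd ℂ) β * γ) • x = 0 ∧
    ((starRingEnd ℂ) α * β * (starRingEnd ℂ) γ) • v -
      ((starRingEnd ℂ) α * (starRingEnd ℂ) γ) • y = 0 ∧
    ((Complex.I / 2) * (((α * (starRingEnd ℂ) β * γ).im : ℝ) : ℂ)) • u = 0 ∧
    ((Complex.I / 2) * ((((starRingEnd ℂ) α * β * (starRingEnd ℂ) γ).im : ℝ) : ℂ)) • v = 0 := by
  have hs : α * conj β * γ = α * (conj β * γ) := mul_assoc _ _ _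
  have ht : conj α * β * conj γ = β * (conj α * conj γ) := by ring
  rw [hs] at h1 ⊢
  rw [ht] at h2 ⊢
  obtain ⟨hsim, hxu⟩ := im_eq_zero_and_eq_smul_of_stationary hu hα
    (mul_ne_zero ((map_ne_zero conj).2 hβ0) hγ0) h1
  obtain ⟨htim, hyv⟩ := im_eq_zero_and_eq_smul_of_stationary hv hβ
    (mul_ne_zero ((map_ne_zero conj).2 hα0) ((map_ne_zero conj).2 hγ0)) h2
  refine ⟨hsim, hxu, hyv, ?_, ?_, ?_, ?_⟩
  · rw [hxu]; module
  · rw [hyv]; module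
  · simp [hsim]
  · simp [htim]

/-- The splitting of the factor differential equations preserves stationary points:
if `(u,v)` is stationary for the combined system, then `Im(α·conj(β)·γ) = 0`, `x = α u`,
`y = β v`, both split systems are stationary, and the rotational terms vanish. -/
theorem splitting_preserves_stationary_points
    {n : ℕ} (u v x y : Fin n → ℂ)
    (hu : star u ⬝ᵥ u = 1) (hv : star v ⬝ᵥ v = 1)
    (hx : star x ⬝ᵥ x = 1) (hy : star y ⬝ᵥ y = 1)
    (γ α β : ℂ)
    (hα : α = star u ⬝ᵥ x) (hβ : β = star v ⬝ᵥ y)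
    (hα0 : α ≠ 0) (hβ0 : β ≠ 0) (hγ0 : γ ≠ 0)
    (h1 : (α * (starRingEnd ℂ) β * γ) • u - ((starRingEnd ℂ) β * γ) • x -
      ((Complex.I / 2) * (((α * (starRingEnd ℂ) β * γ).im : ℝ) : ℂ)) • u = 0)
    (h2 : ((starRingEnd ℂ) α * β * (starRingEnd ℂ) γ) • v -
      ((starRingEnd ℂ) α * (starRingEnd ℂ) γ) • y -
      ((Complex.I / 2) * ((((starRingEnd ℂ) α * β * (starRingEnd ℂ) γ).im : ℝ) : ℂ)) • v = 0) :
    (α * (starRingEnd ℂ) β * γ).im = 0 ∧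
    x = α • u ∧ y = β • v ∧
    (α * (starRingEnd ℂ) β * γ) • u - ((starRingEnd ℂ) β * γ) • x = 0 ∧
    ((starRingEnd ℂ) α * β * (starRingEnd ℂ) γ) • v -
      ((starRingEnd ℂ) α * (starRingEnd ℂ) γ) • y = 0 ∧
    ((Complex.I / 2) * (((α * (starRingEnd ℂ) β * γ).im : ℝ) : ℂ)) • u = 0 ∧
    ((Complex.I / 2) * ((((starRingEnd ℂ) α * β * (starRingEnd ℂ) γ).im : ℝ) : ℂ)) • v = 0 :=
  splitting_preserves_stationary_points_general u v x y hu hv γ α β hα hβ hα0 hβ0 hγ0 h1 h2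
end
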